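/- Under the sequence setup below (no GCR assumption needed), suppose every row of every U^s has 2-norm at most 1. Then, writing Z̄^t = (1/n)𝟙𝟙ᵀZ^t, for every t ≥ 0 the bias-induced error satisfies ⟨Z̄^{t+1}, Z̄^{t+1} − Z̄^t⟩_F ≤ η²·τ^t·(m_b²/n)·Σ_{s=0}^{t} τ^s. -/

import Mathlib

open Finset

/-- Euclidean norm of a row vector in `ℝ^d`. -/
noncomputable def rnorm {d : ℕ} (x : Fin d → ℝ) : ℝ :=
  Real.sqrt (∑ k, (x k) ^ 2)

/-- `clip(x; τ)`: projection of `x` onto the Euclidean ball of radius `τ`. -/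
noncomputable def clipVec {d : ℕ} (τ : ℝ) (x : Fin d → ℝ) : Fin d → ℝ :=
  if rnorm x ≤ τ then x else (τ / rnorm x) • x

/-- Row-wise clipping of a matrix. -/
noncomputable def clipMat {E : Type*} {d : ℕ} (τ : ℝ) (M : Matrix E (Fin d) ℝ) :
    Matrix E (Fin d) ℝ :=
  Matrix.of fun e => clipVec τ (M e)

/-- Frobenius inner product. -/
noncomputable def frobIP {V : Type*} [Fintype V] {d : ℕ} (M N : Matrix V (Fin d) ℝ) : ℝ :=
  ∑ v, ∑ k, M v k * N v k

/-- Frobenius norm. -/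
noncomputable def frobNorm {V : Type*} [Fintype V] {d : ℕ} (M : Matrix V (Fin d) ℝ) : ℝ :=
  Real.sqrt (∑ v, ∑ k, (M v k) ^ 2)

lemma rnorm_eq_norm {d : ℕ} (x : Fin d → ℝ) :
    rnorm x = ‖(EuclideanSpace.equiv (Fin d) ℝ).symm x‖ := by
  rw [EuclideanSpace.norm_eq]
  simp [rnorm, sq_abs]

lemma rnorm_nonneg {d : ℕ} (x : Fin d → ℝ) : 0 ≤ rnorm x := Real.sqrt_nonneg _

lemma rnorm_sum_le {d : ℕ} {ι : Type*} (s : Finset ι) (f : ι → Fin d → ℝ) :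
    rnorm (∑ i ∈ s, f i) ≤ ∑ i ∈ s, rnorm (f i) := by
  simp only [rnorm_eq_norm, map_sum]
  exact norm_sum_le _ _

lemma cauchy {d : ℕ} (a b : Fin d → ℝ) : ∑ k, a k * b k ≤ rnorm a * rnorm b := by
  calc ∑ k, a k * b k ≤ |∑ k, a k * b k| := le_abs_self _
    _ = Real.sqrt ((∑ k, a k * b k) ^ 2) := (Real.sqrt_sq_eq_abs _).symm
    _ ≤ Real.sqrt ((∑ k, a k ^ 2) * ∑ k, b k ^ 2) :=
        Real.sqrt_le_sqrt (sum_mul_sq_le_sq_mul_sq _ _ _)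
    _ = rnorm a * rnorm b := Real.sqrt_mul (by positivity) _

/-- Bound on the bias-induced error: `⟨Z̄^{t+1}, Z̄^{t+1} − Z̄^t⟩_F ≤ η²τ^t(m_b²/n)Σ_{s≤t}τ^s`. -/
theorem bias_induced_error_bound
    {d : ℕ} (hd : 1 ≤ d)
    {V Eh Eb : Type*} [Fintype V] [Fintype Eh] [Fintype Eb]
    [Nonempty V] [Nonempty Eh] [Nonempty Eb] [DecidableEq V]
    (Ch : Matrix V Eh ℝ) (hCh : ∀ e, ∑ v, Ch v e = 0)
    (Cb : Matrix V Eb ℝ)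
    (hCb : ∀ e, ∃ v₀, ∀ v, Cb v e = if v = v₀ then (1 : ℝ) else 0)
    (η : ℝ) (hη : 0 < η)
    (τ : ℕ → ℝ) (hτ : ∀ t, 0 ≤ τ t)
    (U : ℕ → Matrix Eb (Fin d) ℝ) (hU : ∀ s e, rnorm (U s e) ≤ 1)
    (Z : ℕ → Matrix V (Fin d) ℝ)
    (hZ0 : ∀ k, ∑ v, Z 0 v k = 0)
    (hZrec : ∀ t, Z (t + 1) =
      Z t - η • (Ch * clipMat (τ t) (Ch.transpose * Z t)) + (η * τ t) • (Cb * U t))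
    (Zbar : ℕ → Matrix V (Fin d) ℝ)
    (hZbar : ∀ t, Zbar t = Matrix.of fun _ k => (1 / (Fintype.card V : ℝ)) * ∑ w, Z t w k) :
    ∀ t : ℕ,
      frobIP (Zbar (t + 1)) (Zbar (t + 1) - Zbar t) ≤
        η ^ 2 * τ t * ((Fintype.card Eb : ℝ) ^ 2 / (Fintype.card V : ℝ)) *
          ∑ s ∈ Finset.range (t + 1), τ s := by
  intro t
  set n : ℝ := (Fintype.card V : ℝ) with hn
  have hn0 : 0 < n := by
    rw [hn]
    exact_mod_cast Fintype.card_pos (α := V)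
  set m : ℝ := (Fintype.card Eb : ℝ) with hm
  set a : ℕ → Fin d → ℝ := fun s k => ∑ e, U s e k with ha
  -- Column sums evolve only through the bias term.
  have hstep : ∀ r k, (∑ v, Z (r + 1) v k) = (∑ v, Z r v k) + η * τ r * a r k := by
    intro r k
    have h1 : ∑ v, (Ch * clipMat (τ r) (Ch.transpose * Z r)) v k = 0 := by
      simp only [Matrix.mul_apply]
      rw [Finset.sum_comm]
      simp [← Finset.sum_mul, hCh]
    have h2 : ∑ v, (Cb * U r) v k = a r k := by
      simp only [Matrix.mul_apply]
      rw [Finset.sum_comm]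
      refine Finset.sum_congr rfl fun e _ => ?_
      obtain ⟨v₀, hv⟩ := hCb e
      simp [hv, ← Finset.sum_mul, Finset.sum_ite_eq']
    rw [hZrec r]
    simp only [Matrix.add_apply, Matrix.sub_apply, Matrix.smul_apply, smul_eq_mul,
      Finset.sum_add_distrib, Finset.sum_sub_distrib, ← Finset.mul_sum]
    rw [h1, h2]; ring
  have hS : ∀ r k, (∑ v, Z r v k) = η * ∑ s ∈ Finset.range r, τ s * a s k := by
    intro r
    induction r with
    | zero => intro k; simp [hZ0]
    | succ r ih =>
      intro k
      rw [hstep, ih k, Finset.sum_range_succ]; ring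
  have hanorm : ∀ s, rnorm (a s) ≤ m := by
    intro s
    have hsum : a s = ∑ e, (U s e) := by
      funext k; simp [ha, Finset.sum_apply]; exact (Finset.sum_apply k _ _).symm
    rw [hsum]
    calc rnorm (∑ e, U s e) ≤ ∑ e : Eb, rnorm (U s e) := rnorm_sum_le _ _
      _ ≤ ∑ _e : Eb, (1 : ℝ) := Finset.sum_le_sum fun e _ => hU s e
      _ = m := by simp [hm]
  have hm0 : 0 ≤ m := by positivity
  have hinner : ∀ s, ∑ k, a s k * a t k ≤ m ^ 2 := by
    intro s
    refine (cauchy _ _).trans ?_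
    have h1 := hanorm s
    have h2 := hanorm t
    nlinarith [rnorm_nonneg (a s), rnorm_nonneg (a t)]
  have hbody : ∀ (v : V) (k : Fin d),
      (Zbar (t + 1)) v k * ((Zbar (t + 1)) v k - (Zbar t) v k)
        = (η ^ 2 * τ t / n ^ 2) * ((∑ s ∈ Finset.range (t + 1), τ s * a s k) * a t k) := by
    intro v k
    rw [hZbar (t + 1), hZbar t]
    simp only [Matrix.of_apply]
    rw [hS (t + 1) k, hS t k, Finset.sum_range_succ]
    field_simp
    ring
  have hswap : ∑ k, (∑ s ∈ Finset.range (t + 1), τ s * a s k) * a t k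
      = ∑ s ∈ Finset.range (t + 1), τ s * ∑ k, a s k * a t k := by
    simp_rw [Finset.sum_mul, Finset.mul_sum]
    rw [Finset.sum_comm]
    exact Finset.sum_congr rfl fun s _ => Finset.sum_congr rfl fun k _ => by ring
  have hfrob : frobIP (Zbar (t + 1)) (Zbar (t + 1) - Zbar t)
      = (η ^ 2 * τ t / n) * ∑ s ∈ Finset.range (t + 1), τ s * ∑ k, a s k * a t k := by
    calc frobIP (Zbar (t + 1)) (Zbar (t + 1) - Zbar t)
        = ∑ _v : V, ∑ k, (η ^ 2 * τ t / n ^ 2) *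
            ((∑ s ∈ Finset.range (t + 1), τ s * a s k) * a t k) := by
          simp only [frobIP, Matrix.sub_apply]
          exact Finset.sum_congr rfl fun v _ => Finset.sum_congr rfl fun k _ => hbody v k
      _ = n * ((η ^ 2 * τ t / n ^ 2) *
            ∑ k, (∑ s ∈ Finset.range (t + 1), τ s * a s k) * a t k) := by
          rw [← Finset.mul_sum, Finset.sum_const, nsmul_eq_mul, Finset.card_univ, hn]
      _ = (η ^ 2 * τ t / n) * ∑ s ∈ Finset.range (t + 1), τ s * ∑ k, a s k * a t k := by
          rw [hswap]
          field_simp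
  rw [hfrob]
  have hcoef : 0 ≤ η ^ 2 * τ t / n := div_nonneg (mul_nonneg (sq_nonneg η) (hτ t)) hn0.le
  calc (η ^ 2 * τ t / n) * ∑ s ∈ Finset.range (t + 1), τ s * ∑ k, a s k * a t k
      ≤ (η ^ 2 * τ t / n) * ∑ s ∈ Finset.range (t + 1), τ s * m ^ 2 :=
        mul_le_mul_of_nonneg_left (Finset.sum_le_sum fun s _ =>
          mul_le_mul_of_nonneg_left (hinner s) (hτ s)) hcoef
    _ = η ^ 2 * τ t * (m ^ 2 / n) * ∑ s ∈ Finset.range (t + 1), τ s := by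
        rw [← Finset.sum_mul]
        field_simp
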